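/- If a sorting word encoding a sorting process of a permutation σ satisfies property (P_i), then at time t_i the elements currently in the stacks are exactly those of σ^{(i)}. -/

import Mathlib

/-- The three stack operations: `ρ` (push the next input element onto `H`),
`λ` (move the top of `H` onto the top of `V`), `μ` (pop the top of `V` to the output). -/
inductive Op : Type
  | push : Op
  | lam : Op
  | mu : Op
  deriving DecidableEq

/-- A full machine configuration: remaining input, stack `H`, stack `V`
(both stacks have their top at the head of the list), and the output so far. -/
structure Conf : Type where
  input : List ℤ
  H : List ℤ
  V : List ℤ
  output : List ℤ
  deriving DecidableEq

/-- One machine step (`none` if the operation is impossible). -/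
def stepOp : Op → Conf → Option Conf
  | Op.push, ⟨x :: inp, h, v, out⟩ => some ⟨inp, x :: h, v, out⟩
  | Op.lam, ⟨inp, x :: h, v, out⟩ => some ⟨inp, h, x :: v, out⟩
  | Op.mu, ⟨inp, h, x :: v, out⟩ => some ⟨inp, h, v, out ++ [x]⟩
  | _, _ => none

/-- Run a word of operations from a configuration. -/
def runOps : List Op → Conf → Option Conf
  | [], c => some c
  | o :: w, c => (stepOp o c).bind (runOps w)

/-- Initial configuration with input `σ`, empty stacks and empty output. -/
def initConf (σ : List ℤ) : Conf := ⟨σ, [], [], []⟩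

/-- Number of occurrences of the letter `o` in the word `w`. -/
def countOp (w : List Op) (o : Op) : ℕ := (w.filter (fun o' => decide (o' = o))).length

/-- A stack word: every prefix `v` satisfies `|v|_ρ ≥ |v|_λ ≥ |v|_μ`. -/
def IsStackWord (w : List Op) : Prop :=
  ∀ v : List Op, v <+: w →
    countOp v Op.mu ≤ countOp v Op.lam ∧ countOp v Op.lam ≤ countOp v Op.push

/-- A sorting word: a stack word with `|w|_ρ = |w|_λ = |w|_μ`. -/
def IsSortingWord (w : List Op) : Prop :=
  IsStackWord w ∧ countOp w Op.push = countOp w Op.lam ∧ countOp w Op.lam = countOp w Op.mu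

/-- `w` is a sorting word for `σ`: applied to input `σ` it empties everything
and outputs the elements of `σ` in increasing order. -/
def SortsTo (σ : List ℤ) (w : List Op) : Prop :=
  ∃ out : List ℤ, runOps w (initConf σ) = some ⟨[], [], [], out⟩ ∧
    out.Pairwise (· < ·) ∧ out.Perm σ

/-- `σ` is 2-stack sortable. -/
def Sortable (σ : List ℤ) : Prop := ∃ w : List Op, SortsTo σ w

/-- A stack configuration `(V, H)`; each list has the top of the stack at its head
(so the bottom-to-top reading is the reverse of the list). -/
structure SConf : Type where
  V : List ℤ
  H : List ℤ
  deriving DecidableEq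

/-- The elements of a stack configuration. -/
def SConf.elems (c : SConf) : List ℤ := c.V ++ c.H

/-- A stack configuration is poppable if its elements can all be output in
increasing order using only operations `λ` and `μ`. -/
def Poppable (c : SConf) : Prop :=
  ∃ (w : List Op) (out : List ℤ), Op.push ∉ w ∧
    runOps w ⟨[], c.H, c.V, []⟩ = some ⟨[], [], [], out⟩ ∧ out.Pairwise (· < ·)

/-- `c` is the stack configuration reached after performing `w` with input `σ`
(i.e. `c = c_σ(w)`). -/
def ReachesConf (σ : List ℤ) (w : List Op) (c : SConf) : Prop :=
  ∃ inp out : List ℤ, runOps w (initConf σ) = some ⟨inp, c.H, c.V, out⟩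

/-- A stack configuration is reachable for `σ` if it equals `c_σ(w)` for some stack word `w`. -/
def Reachable (σ : List ℤ) (c : SConf) : Prop :=
  ∃ w : List Op, IsStackWord w ∧ ReachesConf σ w c

/-- A total stack configuration of `σ`: its elements are exactly those of `σ`. -/
def TotalFor (σ : List ℤ) (c : SConf) : Prop := c.elems.Perm σ

/-- A pushall stack configuration of `σ`: poppable, total and reachable for `σ`. -/
def IsPushall (σ : List ℤ) (c : SConf) : Prop :=
  Poppable c ∧ TotalFor σ c ∧ Reachable σ c

/-- The decorated word of `w` started from a configuration: each letter is labelled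
with the element it acts on. -/
def decorate : List Op → Conf → Option (List (Op × ℤ))
  | [], _ => some []
  | Op.push :: w, ⟨x :: inp, h, v, out⟩ =>
      (decorate w ⟨inp, x :: h, v, out⟩).map (fun l => (Op.push, x) :: l)
  | Op.lam :: w, ⟨inp, x :: h, v, out⟩ =>
      (decorate w ⟨inp, h, x :: v, out⟩).map (fun l => (Op.lam, x) :: l)
  | Op.mu :: w, ⟨inp, h, x :: v, out⟩ =>
      (decorate w ⟨inp, h, v, out ++ [x]⟩).map (fun l => (Op.mu, x) :: l)
  | _ :: _, _ => none

/-- The restriction `w_{|I}` of a decorated word: keep exactly the letters acting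
on elements of `I`, then forget the labels. -/
def restrictWord (dw : List (Op × ℤ)) (I : Finset ℤ) : List Op :=
  (dw.filter (fun p => decide (p.2 ∈ I))).map Prod.fst

/-- `Bs` is a decomposition of `τ` into (nonempty, contiguous) blocks whose values
decrease from one block to the next. -/
def IsDecBlocks (τ : List ℤ) (Bs : List (List ℤ)) : Prop :=
  τ = Bs.flatten ∧ (∀ B ∈ Bs, B ≠ []) ∧
    Bs.Pairwise (fun B B' => ∀ x ∈ B, ∀ y ∈ B', y < x)

/-- `τ` is `⊖`-indecomposable. -/
def MinusIndecomposable (τ : List ℤ) : Prop :=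
  τ ≠ [] ∧ ∀ Bs : List (List ℤ), IsDecBlocks τ Bs → Bs.length ≤ 1

/-- `Bs` is the `⊖`-decomposition of `τ`: a decomposition into decreasing blocks,
each of which is `⊖`-indecomposable. -/
def IsMinusDecomposition (τ : List ℤ) (Bs : List (List ℤ)) : Prop :=
  IsDecBlocks τ Bs ∧ ∀ B ∈ Bs, MinusIndecomposable B

/-- `k` (0-based) is the position of a right-to-left minimum of `σ`:
no later entry is smaller. -/
def IsRTLMinPos (σ : List ℤ) (k : ℕ) : Prop :=
  k < σ.length ∧ ∀ j, j < σ.length → k < j → ¬ (σ.getD j 0 < σ.getD k 0)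

instance (σ : List ℤ) : DecidablePred (IsRTLMinPos σ) := fun k => by
  unfold IsRTLMinPos; infer_instance

/-- The (increasing) list of positions of the right-to-left minima of `σ`. -/
def rtlPositions (σ : List ℤ) : List ℕ :=
  (List.range σ.length).filter (fun k => decide (IsRTLMinPos σ k))

/-- The number `r` of right-to-left minima of `σ`. -/
def rtlCount (σ : List ℤ) : ℕ := (rtlPositions σ).length

/-- The 0-based position `k_i` of the `i`-th right-to-left minimum of `σ` (`i` is 1-based). -/
def rtlPos (σ : List ℤ) (i : ℕ) : ℕ := (rtlPositions σ).getD (i - 1) 0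

/-- `σ^{(i)}`: the elements `σ_j` with `j < k_i` and `σ_j > σ_{k_i}`, in the order of `σ`. -/
def sigmaUp (σ : List ℤ) (i : ℕ) : List ℤ :=
  (σ.take (rtlPos σ i)).filter (fun x => decide (σ.getD (rtlPos σ i) 0 < x))

/-- `A^{(i)}`: the elements `σ_j` with `j < k_i` and `σ_j > σ_{k_{i+1}}`, in the order of `σ`. -/
def commonA (σ : List ℤ) (i : ℕ) : List ℤ :=
  (σ.take (rtlPos σ i)).filter (fun x => decide (σ.getD (rtlPos σ (i + 1)) 0 < x))

/-- The letter `u` occurs (strictly) before the letter `v` in the decorated word `dw`. -/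
def Before (dw : List (Op × ℤ)) (u v : Op × ℤ) : Prop :=
  ∃ d1 d2 d3 : List (Op × ℤ), dw = d1 ++ u :: d2 ++ v :: d3

/-- The decorated word `dw` (of a sorting word of `σ`) satisfies property `(P_i)`
(`i` is 1-based). -/
def SatisfiesP (σ : List ℤ) (dw : List (Op × ℤ)) (i : ℕ) : Prop :=
  (∃ d1 d2 : List (Op × ℤ),
      dw = d1 ++ (Op.push, σ.getD (rtlPos σ i) 0) :: (Op.lam, σ.getD (rtlPos σ i) 0)
        :: (Op.mu, σ.getD (rtlPos σ i) 0) :: d2) ∧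
  (∀ x ∈ σ, x < σ.getD (rtlPos σ i) 0 →
      Before dw (Op.mu, x) (Op.push, σ.getD (rtlPos σ i) 0)) ∧
  (i < rtlCount σ →
    ∀ (Bs : List (List ℤ)) (p : ℕ) (m : ℤ),
      IsMinusDecomposition (sigmaUp σ i) Bs →
      m ∈ commonA σ i → (∀ y ∈ commonA σ i, m ≤ y) →
      p < Bs.length → m ∈ Bs.getD p [] →
      ∀ (x : ℤ) (j : ℕ), p < j → j < Bs.length → x ∈ Bs.getD j [] →
        Before dw (Op.mu, x) (Op.push, σ.getD (rtlPos σ i + 1) 0))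

/-- An extended stack configuration `(c, i)` of `σ`: here `i` is the number of input
elements already consumed (the paper's index minus one), `c` is poppable and consists
of all elements among the first `i` ones that are greater than some value `p`. -/
def IsExtConf (σ : List ℤ) (c : SConf) (i : ℕ) : Prop :=
  i ≤ σ.length ∧ Poppable c ∧ c.elems.Nodup ∧
    ∃ p : ℤ, ∀ x : ℤ, x ∈ c.elems ↔ (x ∈ σ.take i ∧ p < x)

/-- `(c', j)` is accessible from `(c, i)` for `σ`: starting from stacks `c` with input
`σ_{i+1} … σ_n` remaining, some sequence of operations reaches stacks `c'` with input
`σ_{j+1} … σ_n` remaining, the `μ` operations outputting elements in increasing order. -/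
def AccessibleFrom (σ : List ℤ) (c : SConf) (i : ℕ) (c' : SConf) (j : ℕ) : Prop :=
  ∃ (w : List Op) (out : List ℤ),
    runOps w ⟨σ.drop i, c.H, c.V, []⟩ = some ⟨σ.drop j, c'.H, c'.V, out⟩ ∧
    out.Pairwise (· < ·)

/-- A `P_i`-stack configuration of `σ`: a configuration `c_{σ_{≤k_i}}(w)` such that for
some word `u` whose first letter is the push of `σ_{k_i}`, `w ++ u` is a sorting word of
`σ_{≤k_i}` satisfying `(P_ℓ)` for all `ℓ` from 1 to `i`. -/
def PiConfig (σ : List ℤ) (i : ℕ) (c : SConf) : Prop :=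
  ∃ (w u : List Op) (dw : List (Op × ℤ)),
    u.head? = some Op.push ∧
    countOp w Op.push = rtlPos σ i ∧
    ReachesConf (σ.take (rtlPos σ i + 1)) w c ∧
    SortsTo (σ.take (rtlPos σ i + 1)) (w ++ u) ∧
    decorate (w ++ u) (initConf (σ.take (rtlPos σ i + 1))) = some dw ∧
    ∀ l, 1 ≤ l → l ≤ i → SatisfiesP (σ.take (rtlPos σ i + 1)) dw l

/-- The restriction `c_{|I}` of a stack configuration to the elements of `I`. -/
def restrictConf (c : SConf) (I : List ℤ) : SConf :=
  ⟨c.V.filter (fun x => decide (x ∈ I)), c.H.filter (fun x => decide (x ∈ I))⟩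

/-- The restriction `σ_{|I}` of a list to the elements of `I`. -/
def restrictList (τ I : List ℤ) : List ℤ := τ.filter (fun x => decide (x ∈ I))

/-- Stack `H` (top at head, i.e. bottom-to-top is the reverse) contains the pattern `132`. -/
def HasPattern132 (H : List ℤ) : Prop :=
  ∃ x y z : ℤ, List.Sublist [x, y, z] H.reverse ∧ x < z ∧ z < y

/-- Stack `V` contains the pattern `12` (bottom to top). -/
def HasPattern12 (V : List ℤ) : Prop :=
  ∃ x y : ℤ, List.Sublist [x, y] V.reverse ∧ x < y

/-- The stacks `(V,H)` contain the pattern `|2|13|`: an element `i` of `V` and elements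
`j, k` of `H`, with `j` below `k` in `H`, such that `j < i < k`. -/
def HasPattern2_13 (c : SConf) : Prop :=
  ∃ i ∈ c.V, ∃ j k : ℤ, List.Sublist [j, k] c.H.reverse ∧ j < i ∧ i < k

/-- `y` occurs (strictly) above `x` in the stack `L` (top of stack at the head). -/
def AboveIn (L : List ℤ) (y x : ℤ) : Prop :=
  ∃ (a b : ℕ) (ha : a < L.length) (hb : b < L.length),
    a < b ∧ L.get ⟨a, ha⟩ = y ∧ L.get ⟨b, hb⟩ = x

/-- The increasing list of integers `i, i+1, …, j`. -/
def intRange (i j : ℤ) : List ℤ := (List.range (j + 1 - i).toNat).map (fun t => i + t)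

/-- The decreasing permutation `n (n-1) … 2 1`. -/
def decPerm (n : ℕ) : List ℤ := (List.range n).map (fun t => (n - t : ℤ))

/-! At time `t_i` the input still reads `σ_{k_i} σ_{k_i+1} …`, so the stacks and the output
together hold exactly the entries `σ_j` with `j < k_i`. The output is increasing and `σ_{k_i}`
is only output later, so everything already output lies below `σ_{k_i}`; conversely, by (ii)
every entry below `σ_{k_i}` is output before `σ_{k_i}` is pushed (a well-defined moment, as the
entries of `σ` are distinct). So the stacks hold exactly the earlier entries above `σ_{k_i}`. -/

theorem List.mem_left_iff_of_perm_append {α : Type*} [LinearOrder α] {S D P : List α} {m : α}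
    (hperm : (S ++ D).Perm P) (hP : P.Nodup) (hm : m ∉ P) (hD : ∀ x ∈ D, x < m)
    (hsmall : ∀ x ∈ P, x < m → x ∈ D) (x : α) : x ∈ S ↔ x ∈ P ∧ m < x := by
  have hdisj := List.disjoint_of_nodup_append (hperm.nodup_iff.mpr hP)
  constructor
  · intro hx
    have hxP : x ∈ P := hperm.subset (List.mem_append_left D hx)
    refine ⟨hxP, lt_of_not_ge fun hle => ?_⟩
    rcases hle.lt_or_eq with hlt | rfl
    · exact hdisj hx (hsmall x hxP hlt)
    · exact hm hxP
  · rintro ⟨hxP, hmx⟩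
    rcases List.mem_append.mp (hperm.symm.subset hxP) with hS | hDx
    · exact hS
    · exact absurd (hD x hDx) hmx.not_gt

theorem List.getD_eq_of_drop_eq_cons {α : Type*} {l t : List α} {k : ℕ} {x d : α}
    (h : l.drop k = x :: t) : l.getD k d = x := by
  have hx : l[k]? = some x := by rw [← List.head?_drop, h, List.head?_cons]
  simp [List.getD_eq_getElem?_getD, hx]

def muLabels (dw : List (Op × ℤ)) : List ℤ :=
  dw.filterMap (fun p => if p.1 = Op.mu then some p.2 else none)

def pushLabels (dw : List (Op × ℤ)) : List ℤ :=
  dw.filterMap (fun p => if p.1 = Op.push then some p.2 else none)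

def Conf.contents (c : Conf) : List ℤ := c.H ++ c.V ++ c.output ++ c.input

theorem runOps_append (a b : List Op) (c : Conf) :
    runOps (a ++ b) c = (runOps a c).bind (runOps b) := by
  induction a generalizing c with
  | nil => rfl
  | cons o a ih =>
    simp only [List.cons_append, runOps]
    cases stepOp o c <;> simp [ih]

theorem stepOp_contents_perm {o : Op} {c c' : Conf} (h : stepOp o c = some c') :
    c'.contents.Perm c.contents := by
  rcases c with ⟨_ | ⟨x, inp⟩, _ | ⟨y, hS⟩, _ | ⟨z, vS⟩, out⟩ <;> cases o <;>
    simp only [stepOp, reduceCtorEq, Option.some.injEq] at h <;> subst h <;>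
    exact List.perm_iff_count.mpr fun a => by
      simp only [Conf.contents, List.count_append, List.count_cons, List.count_nil]; omega

theorem runOps_contents_perm {w : List Op} {c c' : Conf} (h : runOps w c = some c') :
    c'.contents.Perm c.contents := by
  induction w generalizing c with
  | nil => cases h; rfl
  | cons o w ih =>
    obtain ⟨c₁, h₁, h⟩ := Option.bind_eq_some_iff.mp h
    exact (ih h).trans (stepOp_contents_perm h₁)

theorem countOp_append (a b : List Op) (o : Op) :
    countOp (a ++ b) o = countOp a o + countOp b o := by
  simp [countOp, List.filter_append]

theorem stepOp_input {o : Op} {c c' : Conf} (h : stepOp o c = some c') :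
    c'.input = c.input.drop (countOp [o] Op.push) := by
  rcases c with ⟨_ | ⟨x, inp⟩, _ | ⟨y, hS⟩, _ | ⟨z, vS⟩, out⟩ <;> cases o <;>
    simp only [stepOp, reduceCtorEq, Option.some.injEq] at h <;> subst h <;> simp [countOp]

theorem runOps_input {w : List Op} {c c' : Conf} (h : runOps w c = some c') :
    c'.input = c.input.drop (countOp w Op.push) := by
  induction w generalizing c with
  | nil => cases h; rfl
  | cons o w ih =>
    obtain ⟨c₁, h₁, h⟩ := Option.bind_eq_some_iff.mp h
    rw [ih h, stepOp_input h₁, List.drop_drop, ← countOp_append, List.singleton_append]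

theorem stepOp_output_prefix {o : Op} {c c' : Conf} (h : stepOp o c = some c') :
    c.output <+: c'.output := by
  rcases c with ⟨_ | ⟨x, inp⟩, _ | ⟨y, hS⟩, _ | ⟨z, vS⟩, out⟩ <;> cases o <;>
    simp only [stepOp, reduceCtorEq, Option.some.injEq] at h <;> subst h <;> simp

theorem runOps_output_prefix {w : List Op} {c c' : Conf} (h : runOps w c = some c') :
    c.output <+: c'.output := by
  induction w generalizing c with
  | nil => cases h; exact List.prefix_refl _
  | cons o w ih =>
    obtain ⟨c₁, h₁, h⟩ := Option.bind_eq_some_iff.mp h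
    exact (stepOp_output_prefix h₁).trans (ih h)

theorem SortsTo.lt_of_mem_output {σ : List ℤ} {u v : List Op} {s : Conf} {x y : ℤ}
    (hw : SortsTo σ (u ++ v)) (hs : runOps u (initConf σ) = some s) (hy : y ∈ σ)
    (hy' : y ∉ s.output) (hx : x ∈ s.output) : x < y := by
  obtain ⟨out, hrun, hsorted, hout⟩ := hw
  rw [runOps_append, hs, Option.bind_some] at hrun
  obtain ⟨t, rfl⟩ := runOps_output_prefix hrun
  have hyt : y ∈ t := (List.mem_append.mp (hout.mem_iff.mpr hy)).resolve_left hy'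
  exact (List.pairwise_append.mp hsorted).2.2 x hx y hyt

theorem decorate_output {w : List Op} {c c' : Conf} {dw : List (Op × ℤ)}
    (hd : decorate w c = some dw) (hr : runOps w c = some c') :
    c'.output = c.output ++ muLabels dw := by
  induction w generalizing c dw with
  | nil => cases hd; cases hr; simp [muLabels]
  | cons o w ih =>
    rcases c with ⟨_ | ⟨x, inp⟩, _ | ⟨y, hS⟩, _ | ⟨z, vS⟩, out⟩ <;> cases o <;>
      simp only [decorate, runOps, stepOp, Option.map_eq_some_iff, Option.bind_some,
        reduceCtorEq] at hd hr <;>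
      obtain ⟨d, hd, rfl⟩ := hd <;> simp [ih hd hr, muLabels]

theorem pushLabels_prefix_of_decorate {w : List Op} {c : Conf} {dw : List (Op × ℤ)}
    (hd : decorate w c = some dw) : pushLabels dw <+: c.input := by
  induction w generalizing c dw with
  | nil => cases hd; exact List.nil_prefix
  | cons o w ih =>
    rcases c with ⟨_ | ⟨x, inp⟩, _ | ⟨y, hS⟩, _ | ⟨z, vS⟩, out⟩ <;> cases o <;>
      simp only [decorate, Option.map_eq_some_iff, reduceCtorEq] at hd <;>
      obtain ⟨d, hd, rfl⟩ := hd <;> simpa [pushLabels] using ih hd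

theorem decorate_append {u v : List Op} {c : Conf} {dw : List (Op × ℤ)}
    (hd : decorate (u ++ v) c = some dw) :
    ∃ du c' dv, decorate u c = some du ∧ runOps u c = some c' ∧
      decorate v c' = some dv ∧ dw = du ++ dv := by
  induction u generalizing c dw with
  | nil => exact ⟨[], c, dw, rfl, rfl, hd, rfl⟩
  | cons o u ih =>
    rcases c with ⟨_ | ⟨x, inp⟩, _ | ⟨y, hS⟩, _ | ⟨z, vS⟩, out⟩ <;> cases o <;>
      simp only [List.cons_append, decorate, Option.map_eq_some_iff, reduceCtorEq] at hd <;>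
      obtain ⟨d, hd, rfl⟩ := hd <;> obtain ⟨du, c', dv, h₁, h₂, h₃, rfl⟩ := ih hd <;>
      exact ⟨_ :: du, c', dv, by simp [decorate, h₁], by simpa [runOps, stepOp] using h₂, h₃, rfl⟩

theorem decorate_push_cons {v : List Op} {c : Conf} {dv : List (Op × ℤ)}
    (hd : decorate (Op.push :: v) c = some dv) :
    ∃ x inp dv', c.input = x :: inp ∧ dv = (Op.push, x) :: dv' := by
  rcases c with ⟨_ | ⟨x, inp⟩, hS, vS, out⟩
  · simp [decorate] at hd
  · simp only [decorate, Option.map_eq_some_iff] at hd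
    obtain ⟨d, -, rfl⟩ := hd
    exact ⟨x, inp, d, rfl, rfl⟩

theorem runOps_initConf_perm_take {σ : List ℤ} {u : List Op} {s : Conf}
    (hs : runOps u (initConf σ) = some s) :
    (s.H ++ s.V ++ s.output).Perm (σ.take (countOp u Op.push)) := by
  have h := runOps_contents_perm hs
  rw [Conf.contents, runOps_input hs] at h
  rw [← List.perm_append_right_iff (σ.drop _), List.take_append_drop]
  simpa [Conf.contents, initConf] using h

@[simp]
theorem mem_muLabels {dw : List (Op × ℤ)} {x : ℤ} : x ∈ muLabels dw ↔ (Op.mu, x) ∈ dw := by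
  simp [muLabels]

@[simp]
theorem mem_pushLabels {dw : List (Op × ℤ)} {x : ℤ} : x ∈ pushLabels dw ↔ (Op.push, x) ∈ dw := by
  simp [pushLabels]

theorem Before.mem_of_eq_append {dw A B : List (Op × ℤ)} {a b : Op × ℤ} (h : Before dw a b)
    (hdw : dw = A ++ b :: B) (hA : b ∉ A) (hB : b ∉ B) : a ∈ A := by
  obtain ⟨d₁, d₂, d₃, rfl⟩ := h
  obtain ⟨rfl, -⟩ := (List.append_cons_inj_of_notMem hA hB).mp hdw.symm
  simp

theorem push_not_mem_of_nodup_pushLabels {A B : List (Op × ℤ)} {m : ℤ}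
    (hnd : (pushLabels (A ++ (Op.push, m) :: B)).Nodup) :
    (Op.push, m) ∉ A ∧ (Op.push, m) ∉ B := by
  have h : (pushLabels A ++ m :: pushLabels B).Nodup := by simpa [pushLabels] using hnd
  rw [List.nodup_middle, List.nodup_cons, List.mem_append, mem_pushLabels, mem_pushLabels] at h
  exact not_or.mp h.1

theorem mem_output_of_before_push {u : List Op} {c s : Conf} {du dv : List (Op × ℤ)} {x m : ℤ}
    (hdu : decorate u c = some du) (hs : runOps u c = some s)
    (hnd : (pushLabels (du ++ (Op.push, m) :: dv)).Nodup)
    (h : Before (du ++ (Op.push, m) :: dv) (Op.mu, x) (Op.push, m)) : x ∈ s.output := by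
  obtain ⟨hdu', hdv'⟩ := push_not_mem_of_nodup_pushLabels hnd
  rw [decorate_output hdu hs, List.mem_append, mem_muLabels]
  exact Or.inr (h.mem_of_eq_append rfl hdu' hdv')

theorem propPi_stacks_at_ti_general (σ : List ℤ) (hσ : σ.Nodup)
    (w : List Op) (dw : List (Op × ℤ))
    (hw : SortsTo σ w) (hdw : decorate w (initConf σ) = some dw)
    (i : ℕ)
    (hP : SatisfiesP σ dw i)
    (u v : List Op) (hsplit : w = u ++ Op.push :: v)
    (hcount : countOp u Op.push = rtlPos σ i)
    (s : Conf) (hs : runOps u (initConf σ) = some s) :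
    ∀ x : ℤ, (x ∈ s.H ∨ x ∈ s.V) ↔ x ∈ sigmaUp σ i := by
  subst hsplit
  obtain ⟨du, s', dv, hdu, hs', hdv, rfl⟩ := decorate_append hdw
  obtain rfl : s = s' := Option.some.inj (hs.symm.trans hs')
  obtain ⟨m, rest, dv, hinput, rfl⟩ := decorate_push_cons hdv
  have hdrop : σ.drop (rtlPos σ i) = m :: rest := by
    rw [← hcount, ← hinput, runOps_input hs]; rfl
  have hm : σ.getD (rtlPos σ i) 0 = m := List.getD_eq_of_drop_eq_cons hdrop
  have hstate : (s.H ++ s.V ++ s.output).Perm (σ.take (rtlPos σ i)) :=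
    hcount ▸ runOps_initConf_perm_take hs
  have hmtake : m ∉ σ.take (rtlPos σ i) := fun h =>
    List.disjoint_take_drop hσ le_rfl h (hdrop ▸ List.mem_cons_self)
  have hlt : ∀ x ∈ s.output, x < m := fun x =>
    hw.lt_of_mem_output hs (List.mem_of_mem_drop (hdrop ▸ List.mem_cons_self))
      (fun h => hmtake (hstate.subset (List.mem_append_right _ h)))
  have hsmall : ∀ x ∈ σ.take (rtlPos σ i), x < m → x ∈ s.output := fun x hx hxm =>
    mem_output_of_before_push hdu hs ((pushLabels_prefix_of_decorate hdw).sublist.nodup hσ)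
      (hm ▸ hP.2.1 x (List.mem_of_mem_take hx) (hm ▸ hxm))
  intro x
  rw [← List.mem_append, List.mem_left_iff_of_perm_append hstate (hσ.sublist (List.take_sublist _ _))
    hmtake hlt hsmall x]
  simp only [sigmaUp, List.mem_filter, hm, decide_eq_true_eq]

/-- If a sorting word of `σ` satisfies `(P_i)`, then at time `t_i` (just before the
push of `σ_{k_i}`) the elements currently in the stacks are exactly those of
`σ^{(i)}`. -/
theorem propPi_stacks_at_ti (σ : List ℤ) (hσ : σ.Nodup)
    (w : List Op) (dw : List (Op × ℤ))
    (hw : SortsTo σ w) (hdw : decorate w (initConf σ) = some dw)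
    (i : ℕ) (hi : 1 ≤ i) (hir : i ≤ rtlCount σ)
    (hP : SatisfiesP σ dw i)
    (u v : List Op) (hsplit : w = u ++ Op.push :: v)
    (hcount : countOp u Op.push = rtlPos σ i)
    (s : Conf) (hs : runOps u (initConf σ) = some s) :
    ∀ x : ℤ, (x ∈ s.H ∨ x ∈ s.V) ↔ x ∈ sigmaUp σ i :=
  propPi_stacks_at_ti_general σ hσ w dw hw hdw i hP u v hsplit hcount s hs
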